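/- arXiv:1611.00653 — 3 statements merged into one kernel-verified Lean document; each statement's English description precedes it below -/
import Mathlib

section
/- Let n ≥ 1 and let A be an n×n complex matrix such that for every p ∈ (1,∞) and every ξ ∈ ℂⁿ one has Re⟨Aξ, 𝒥_pξ⟩ ≥ 0 (i.e., Δ_p(A) ≥ 0 for all p ∈ (1,∞)). Then A has real entries, i.e., Im A = 0. -/
open scoped BigOperators ComplexConjugate Matrix

noncomputable section

namespace Paper

/-- The sesquilinear pairing `⟨z,w⟩ = ∑ j, z j * conj (w j)` on `ℂⁿ`. -/
def herm {n : ℕ} (z w : Fin n → ℂ) : ℂ := ∑ j, z j * conj (w j)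

/-- Euclidean norm of a complex vector, `|z| = √⟨z,z⟩`. -/
def cnorm {n : ℕ} (z : Fin n → ℂ) : ℝ := Real.sqrt (herm z z).re

/-- Componentwise complex conjugate of a vector. -/
def vconj {n : ℕ} (z : Fin n → ℂ) : Fin n → ℂ := fun j => conj (z j)

/-- The ℝ-linear map `𝒥_p(α + iβ) = α/p + iβ/q`, where `1/p + 1/q = 1`,
i.e. `1/q = 1 - 1/p`. -/
def Jmap {n : ℕ} (p : ℝ) (ξ : Fin n → ℂ) : Fin n → ℂ :=
  fun j => (((ξ j).re / p : ℝ) : ℂ) + Complex.I * (((ξ j).im * (1 - 1 / p) : ℝ) : ℂ)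

/-- `Δ_p(A) = 2 · min { Re⟨Aξ, 𝒥_p ξ⟩ : ξ ∈ ℂⁿ, |ξ| = 1 }`. -/
def Deltap {n : ℕ} (p : ℝ) (A : Matrix (Fin n) (Fin n) ℂ) : ℝ :=
  sInf {t : ℝ | ∃ ξ : Fin n → ℂ, cnorm ξ = 1 ∧
    t = 2 * (herm (A.mulVec ξ) (Jmap p ξ)).re}

/-- `Δ_r(A) = min { Re⟨Aξ,ξ⟩ − |1 − 2/r|·|⟨Aξ,ξ̄⟩| : |ξ| = 1 }`, the extension of
`Δ_p` to all `r > 0`. -/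
def DeltaGen {n : ℕ} (r : ℝ) (A : Matrix (Fin n) (Fin n) ℂ) : ℝ :=
  sInf {t : ℝ | ∃ ξ : Fin n → ℂ, cnorm ξ = 1 ∧
    t = (herm (A.mulVec ξ) ξ).re - |1 - 2 / r| * ‖herm (A.mulVec ξ) (vconj ξ)‖}

/-- Membership in the class `𝒜_{λ,Λ}`:
`Re⟨Aξ,ξ⟩ ≥ λ|ξ|²` and `|⟨Aξ,η⟩| ≤ Λ|ξ||η|`. -/
def memA {n : ℕ} (lam Lam : ℝ) (A : Matrix (Fin n) (Fin n) ℂ) : Prop :=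
  (∀ ξ : Fin n → ℂ, lam * cnorm ξ ^ 2 ≤ (herm (A.mulVec ξ) ξ).re) ∧
  (∀ ξ η : Fin n → ℂ, ‖herm (A.mulVec ξ) η‖ ≤ Lam * cnorm ξ * cnorm η)

/-- `λ_A = min { Re⟨Aξ,ξ⟩ : |ξ| = 1 }`. -/
def lamA {n : ℕ} (A : Matrix (Fin n) (Fin n) ℂ) : ℝ :=
  sInf {t : ℝ | ∃ ξ : Fin n → ℂ, cnorm ξ = 1 ∧ t = (herm (A.mulVec ξ) ξ).re}

/-- `Λ_A = max { |⟨Aξ,η⟩| : |ξ| = |η| = 1 }`. -/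
def LamA {n : ℕ} (A : Matrix (Fin n) (Fin n) ℂ) : ℝ :=
  sSup {t : ℝ | ∃ ξ η : Fin n → ℂ, cnorm ξ = 1 ∧ cnorm η = 1 ∧
    t = ‖herm (A.mulVec ξ) η‖}

/-- `μ(A) = inf { Re⟨Aξ,ξ⟩/|⟨Aξ,ξ̄⟩| : ⟨Aξ,ξ̄⟩ ≠ 0 }`. -/
def muA {n : ℕ} (A : Matrix (Fin n) (Fin n) ℂ) : ℝ :=
  sInf {t : ℝ | ∃ ξ : Fin n → ℂ, herm (A.mulVec ξ) (vconj ξ) ≠ 0 ∧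
    t = (herm (A.mulVec ξ) ξ).re / ‖herm (A.mulVec ξ) (vconj ξ)‖}

/-- Second real Fréchet derivative of `F : ℂ → ℝ` at `ζ`, as a bilinear expression. -/
def D2 (F : ℂ → ℝ) (ζ : ℂ) (ξ η : ℂ) : ℝ := fderiv ℝ (fderiv ℝ F) ζ ξ η

/-- `F : ℂ → ℝ` is twice real-Fréchet differentiable at `ζ`. -/
def TwiceDiffAt (F : ℂ → ℝ) (ζ : ℂ) : Prop :=
  DifferentiableAt ℝ F ζ ∧ DifferentiableAt ℝ (fderiv ℝ F) ζ

/-- `H_F^A[ζ;ξ] = ∑ j, D²F(ζ)[ξ_j, (Aξ)_j]`. -/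
def HFA {n : ℕ} (F : ℂ → ℝ) (A : Matrix (Fin n) (Fin n) ℂ) (ζ : ℂ) (ξ : Fin n → ℂ) : ℝ :=
  ∑ j, D2 F ζ (ξ j) (A.mulVec ξ j)

/-- The power function `F_r(ζ) = |ζ|^r`. -/
def Fpow (r : ℝ) (ζ : ℂ) : ℝ := ‖ζ‖ ^ r

/-- Real dot product. -/
def rdot {n : ℕ} (u v : Fin n → ℝ) : ℝ := ∑ j, u j * v j

/-- Euclidean norm of a real vector. -/
def enorm {n : ℕ} (u : Fin n → ℝ) : ℝ := Real.sqrt (∑ j, u j ^ 2)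

/-- Operator norm `‖M‖ = max { |Mu| : |u| = 1 }` of a real matrix. -/
def opnormR {n : ℕ} (M : Matrix (Fin n) (Fin n) ℝ) : ℝ :=
  sSup {t : ℝ | ∃ u : Fin n → ℝ, enorm u = 1 ∧ t = enorm (M.mulVec u)}

/-- Symmetric part `M_s = (M + Mᵀ)/2`. -/
def symPart {n : ℕ} {R : Type*} [Field R] (M : Matrix (Fin n) (Fin n) R) :
    Matrix (Fin n) (Fin n) R := (2 : R)⁻¹ • (M + Mᵀ)

/-- Antisymmetric part `M_a = (M − Mᵀ)/2`. -/
def antiPart {n : ℕ} {R : Type*} [Field R] (M : Matrix (Fin n) (Fin n) R) :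
    Matrix (Fin n) (Fin n) R := (2 : R)⁻¹ • (M - Mᵀ)

/-- `𝒱_p(V) = ((p−2)/(2√(p−1)))·V_s + (p/(2√(p−1)))·V_a`. -/
def Vmap {n : ℕ} (p : ℝ) (V : Matrix (Fin n) (Fin n) ℝ) : Matrix (Fin n) (Fin n) ℝ :=
  ((p - 2) / (2 * Real.sqrt (p - 1))) • symPart V + (p / (2 * Real.sqrt (p - 1))) • antiPart V

/-- A real matrix is (symmetric) positive definite. -/
def RPosDef {n : ℕ} (M : Matrix (Fin n) (Fin n) ℝ) : Prop :=
  Mᵀ = M ∧ ∀ u : Fin n → ℝ, u ≠ 0 → 0 < rdot (M.mulVec u) u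

/-- The complex matrix `U + iV` built from two real matrices. -/
def cplx {n : ℕ} (U V : Matrix (Fin n) (Fin n) ℝ) : Matrix (Fin n) (Fin n) ℂ :=
  Matrix.of fun i j => ((U i j : ℂ) + Complex.I * (V i j : ℂ))

/-- `Φ : ℂ×ℂ → ℝ` is twice real-Fréchet differentiable at `v`. -/
def TwiceDiffAt2 (Φ : ℂ × ℂ → ℝ) (v : ℂ × ℂ) : Prop :=
  DifferentiableAt ℝ Φ v ∧ DifferentiableAt ℝ (fderiv ℝ Φ) v

/-- `H_Φ^{(A,B)}[v;ω] = ∑ j, D²Φ(v)[(ω₁ⱼ, ω₂ⱼ), ((Aω₁)ⱼ, (Bω₂)ⱼ)]`. -/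
def HAB {n : ℕ} (Φ : ℂ × ℂ → ℝ) (A B : Matrix (Fin n) (Fin n) ℂ) (v : ℂ × ℂ)
    (ω₁ ω₂ : Fin n → ℂ) : ℝ :=
  ∑ j, fderiv ℝ (fderiv ℝ Φ) v (ω₁ j, ω₂ j) (A.mulVec ω₁ j, B.mulVec ω₂ j)

/-- The Nazarov–Treil Bellman function `Q_{p,δ}` (with `q = p/(p−1)` passed explicitly). -/
def QNT (p q δ : ℝ) (ζ η : ℂ) : ℝ :=
  ‖ζ‖ ^ p + ‖η‖ ^ q +
    δ * (if ‖ζ‖ ^ p ≤ ‖η‖ ^ q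
      then ‖ζ‖ ^ (2 : ℝ) * ‖η‖ ^ (2 - q)
      else (2 / p) * ‖ζ‖ ^ p + (2 / q - 1) * ‖η‖ ^ q)

/-- `Δ_p` of a matrix-valued function on a subset `Ω ⊆ ℝᵐ`:
`2 · essinf_{x∈Ω} min_{|ξ|=1} Re⟨A(x)ξ, 𝒥_p ξ⟩`. -/
def DeltapAE {m n : ℕ} (p : ℝ) (A : (Fin m → ℝ) → Matrix (Fin n) (Fin n) ℂ)
    (Ω : Set (Fin m → ℝ)) : ℝ :=
  2 * essInf (fun x => sInf {t : ℝ | ∃ ξ : Fin n → ℂ, cnorm ξ = 1 ∧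
      t = (herm ((A x).mulVec ξ) (Jmap p ξ)).re}) (MeasureTheory.volume.restrict Ω)

end Paper

/-!
Writing `R(ξ) = ∑ Re (Aξ)ₘ Re ξₘ` and `I(ξ) = ∑ Im (Aξ)ₘ Im ξₘ`, one has
`Re⟨Aξ, 𝒥_p ξ⟩ = R(ξ)/p + I(ξ)(1 - 1/p)`, so letting `p → ∞` gives `I(ξ) ≥ 0` for every `ξ`.
For `ξ = t eⱼ + i eᵢ` this reads `t · Im Aᵢⱼ + Re Aᵢᵢ ≥ 0` for all real `t`, forcing `Im Aᵢⱼ = 0`.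
-/

open Matrix Filter Topology

namespace Paper

lemma re_herm_Jmap {n : ℕ} (p : ℝ) (z ξ : Fin n → ℂ) :
    (herm z (Jmap p ξ)).re =
      (∑ m, (z m).re * (ξ m).re) / p + (∑ m, (z m).im * (ξ m).im) * (1 - 1 / p) := by
  simp only [herm, Jmap, Complex.re_sum, Finset.sum_div, Finset.sum_mul,
    ← Finset.sum_add_distrib]
  refine Finset.sum_congr rfl fun m _ => ?_
  simp only [Complex.mul_re, Complex.conj_re, Complex.conj_im, Complex.add_re, Complex.add_im,
    Complex.mul_im, Complex.ofReal_re, Complex.ofReal_im, Complex.I_re, Complex.I_im]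
  ring

lemma nonneg_of_forall_one_lt_div_add_mul {a b : ℝ}
    (h : ∀ p : ℝ, 1 < p → 0 ≤ a / p + b * (1 - 1 / p)) : 0 ≤ b := by
  have hlim : Tendsto (fun p : ℝ => b + (a - b) * p⁻¹) atTop (𝓝 (b + (a - b) * 0)) :=
    tendsto_const_nhds.add (tendsto_const_nhds.mul tendsto_inv_atTop_zero)
  have hev : ∀ᶠ p in atTop, 0 ≤ b + (a - b) * p⁻¹ :=
    (eventually_gt_atTop 1).mono fun p hp => by
      convert h p hp using 1
      ring
  simpa using ge_of_tendsto hlim hev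

lemma sum_im_mul_im_nonneg_of_forall_re_herm_Jmap_nonneg {n : ℕ} {z ξ : Fin n → ℂ}
    (h : ∀ p : ℝ, 1 < p → 0 ≤ (herm z (Jmap p ξ)).re) : 0 ≤ ∑ m, (z m).im * (ξ m).im :=
  nonneg_of_forall_one_lt_div_add_mul fun p hp => re_herm_Jmap p z ξ ▸ h p hp

lemma eq_zero_of_forall_nonneg_mul_add {a b : ℝ} (h : ∀ t : ℝ, 0 ≤ t * a + b) : a = 0 := by
  by_contra ha
  have := h (-(b + 1) / a)
  rw [div_mul_cancel₀ _ ha] at this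
  linarith

lemma sum_im_mulVec_mul_im_single {n : ℕ} (A : Matrix (Fin n) (Fin n) ℂ) (i j : Fin n) (t : ℝ) :
    ∑ m, ((A *ᵥ (Pi.single j (t : ℂ) + Pi.single i Complex.I)) m).im *
        ((Pi.single j (t : ℂ) + Pi.single i Complex.I : Fin n → ℂ) m).im =
      t * (A i j).im + (A i i).re := by
  simp [mulVec_add, Pi.single_apply, mul_comm, apply_ite Complex.im]

end Paper

theorem statement15_general (n : ℕ) (A : Matrix (Fin n) (Fin n) ℂ)
    (h : ∀ p : ℝ, 1 < p → ∀ ξ : Fin n → ℂ,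
      0 ≤ (Paper.herm (A.mulVec ξ) (Paper.Jmap p ξ)).re) :
    ∀ i j, (A i j).im = 0 := by
  intro i j
  refine Paper.eq_zero_of_forall_nonneg_mul_add (b := (A i i).re) fun t => ?_
  rw [← Paper.sum_im_mulVec_mul_im_single]
  exact Paper.sum_im_mul_im_nonneg_of_forall_re_herm_Jmap_nonneg fun p hp => h p hp _

/-- if `Re⟨Aξ,𝒥_pξ⟩ ≥ 0` for every `p ∈ (1,∞)` and every `ξ`, then
`A` has real entries. -/
theorem statement15 (n : ℕ) (hn : 1 ≤ n) (A : Matrix (Fin n) (Fin n) ℂ)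
    (h : ∀ p : ℝ, 1 < p → ∀ ξ : Fin n → ℂ,
      0 ≤ (Paper.herm (A.mulVec ξ) (Paper.Jmap p ξ)).re) :
    ∀ i j, (A i j).im = 0 :=
  statement15_general n A h
end
end

section
/- Let p ≥ 2 with conjugate exponent q = p/(p−1), let δ > 0, and let Q = Q_{p,δ} be the Nazarov–Treil Bellman function. Then: (a) 0 ≤ Q(ζ,η) ≤ (1+δ)·(|ζ|^p + |η|^q) for all ζ, η ∈ ℂ; (b) Q is real-Fréchet differentiable at every point of ℂ×ℂ (ℂ×ℂ viewed as a four-dimensional real vector space), and for all ζ, η ∈ ℂ the partial Fréchet derivatives satisfy ‖D_ζQ(ζ,η)‖ ≤ (p + 2δ)·max{ |ζ|^{p−1}, |η| } and ‖D_ηQ(ζ,η)‖ ≤ (q + (2−q)δ)·|η|^{q−1}, where D_ζQ(ζ,η) is the real Fréchet derivative of ζ' ↦ Q(ζ',η) at ζ (an ℝ-linear functional on ℂ ≅ ℝ²), D_ηQ(ζ,η) is defined analogously, and ‖·‖ is the operator norm. -/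
open scoped BigOperators ComplexConjugate Matrix

noncomputable section

/-!
On each of the regions `|ζ|^p ≤ |η|^q` and `|ζ|^p ≥ |η|^q`, `Q` is a combination of powers
`|ζ|^r`, `|η|^r`, whose real derivative at `x` is `r |x|^(r-2) ⟨x, ·⟩`, of norm `r |x|^(r-1)`.
Since `(p-1)(q-1) = 1`, the first region is `|ζ| ≤ |η|^(q-1)`, and there the size and gradient
bounds become comparisons of powers of `|η|`. On the interface `|ζ| = |η|^(q-1)` the two formulas
agree together with their first derivatives, so `Q` is differentiable across it; at the origin
`0 ≤ Q ≤ (1+δ)(|ζ|^p + |η|^q)`, which is `o(‖(ζ,η)‖)` because `p, q > 1`.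
-/

open Asymptotics Filter Topology

section Calculus

variable {E : Type*} [NormedAddCommGroup E] [NormedSpace ℝ E]

theorem HasFDerivAt.zero_of_abs_le {f g : E → ℝ} {x : E}
    (hg : HasFDerivAt g (0 : E →L[ℝ] ℝ) x) (hgx : g x = 0) (hfx : f x = 0)
    (hfg : ∀ y, |f y| ≤ g y) : HasFDerivAt f (0 : E →L[ℝ] ℝ) x := by
  rw [hasFDerivAt_iff_isLittleO_nhds_zero] at hg ⊢
  refine (isBigO_of_le _ fun h => ?_).trans_isLittleO hg
  simpa [hfx, hgx] using (hfg (x + h)).trans (le_abs_self _)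

theorem HasFDerivAt.of_eq_or_eq {f f₁ f₂ : E → ℝ} {L : E →L[ℝ] ℝ} {x : E}
    (h₁ : HasFDerivAt f₁ L x) (h₂ : HasFDerivAt f₂ L x) (hx₁ : f x = f₁ x) (hx₂ : f x = f₂ x)
    (hf : ∀ y, f y = f₁ y ∨ f y = f₂ y) : HasFDerivAt f L x := by
  rw [hasFDerivAt_iff_isLittleO_nhds_zero] at h₁ h₂ ⊢
  refine (isBigO_of_le _ fun h => ?_).trans_isLittleO
    ((isLittleO_abs_left.2 h₁).add (isLittleO_abs_left.2 h₂))
  have h₁ := abs_nonneg (f₁ (x + h) - f₁ x - L h)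
  have h₂ := abs_nonneg (f₂ (x + h) - f₂ x - L h)
  rw [Real.norm_eq_abs, Real.norm_eq_abs, abs_of_nonneg (add_nonneg h₁ h₂)]
  rcases hf (x + h) with hy | hy
  · rw [hy, hx₁]; exact le_add_of_nonneg_right h₂
  · rw [hy, hx₂]; exact le_add_of_nonneg_left h₁

variable {F G : Type*} [NormedAddCommGroup F] [NormedSpace ℝ F] [NormedAddCommGroup G]
  [NormedSpace ℝ G]

theorem HasFDerivAt.partial_fst {f : E × F → G} {L₁ : E →L[ℝ] G} {L₂ : F →L[ℝ] G} {x : E}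
    {y : F} (h : HasFDerivAt f (L₁.coprod L₂) (x, y)) :
    HasFDerivAt (fun x' => f (x', y)) L₁ x := by
  simpa [Function.comp_def] using h.comp x (hasFDerivAt_prodMk_left (𝕜 := ℝ) x y)

theorem HasFDerivAt.partial_snd {f : E × F → G} {L₁ : E →L[ℝ] G} {L₂ : F →L[ℝ] G} {x : E}
    {y : F} (h : HasFDerivAt f (L₁.coprod L₂) (x, y)) :
    HasFDerivAt (fun y' => f (x, y')) L₂ y := by
  simpa [Function.comp_def] using h.comp y (hasFDerivAt_prodMk_right (𝕜 := ℝ) x y)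

end Calculus

section NormRpow

variable {E : Type*} [NormedAddCommGroup E] [InnerProductSpace ℝ E]

def fderivNormRpow (r : ℝ) (x : E) : E →L[ℝ] ℝ := (r * ‖x‖ ^ (r - 2)) • innerSL ℝ x

@[simp] theorem fderivNormRpow_zero (r : ℝ) : fderivNormRpow r (0 : E) = 0 := by
  simp [fderivNormRpow]

theorem hasFDerivAt_norm_rpow' (r : ℝ) {x : E} (hx : x ≠ 0 ∨ 1 < r) :
    HasFDerivAt (fun x : E ↦ ‖x‖ ^ r) (fderivNormRpow r x) x := by
  rcases hx with hx | hr
  · convert ((hasStrictFDerivAt_norm_sq x).rpow_const (p := r / 2) (by simp [hx])).hasFDerivAt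
      using 1
    · funext y
      rw [← Real.rpow_natCast_mul (norm_nonneg _)]
      ring_nf
    · simp_rw [fderivNormRpow, ← Real.rpow_natCast_mul (norm_nonneg _),
        ← Nat.cast_smul_eq_nsmul ℝ, smul_smul]
      ring_nf
  · exact hasFDerivAt_norm_rpow x hr

theorem norm_fderivNormRpow_le {r : ℝ} (hr : 0 ≤ r) (x : E) :
    ‖fderivNormRpow r x‖ ≤ r * ‖x‖ ^ (r - 1) := by
  rcases eq_or_ne x 0 with rfl | hx
  · simp only [fderivNormRpow_zero, norm_zero]
    positivity
  · have hx' : 0 < ‖x‖ := norm_pos_iff.2 hx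
    rw [fderivNormRpow, norm_smul, innerSL_apply_norm, Real.norm_of_nonneg (by positivity),
      mul_assoc, ← Real.rpow_add_one hx'.ne', show r - 2 + 1 = r - 1 by ring]

end NormRpow

namespace NazarovTreil

section Exponents

variable {p q s t : ℝ}

theorem rpow_rpow_inv_eq_rpow_sub_one (hpq : p.HolderConjugate q) (ht : 0 ≤ t) :
    (t ^ q) ^ p⁻¹ = t ^ (q - 1) := by
  rw [← Real.rpow_mul ht]
  congr 1
  field_simp [hpq.ne_zero]
  linarith [hpq.mul_eq_add]

theorem le_rpow_sub_one_of_rpow_le (hpq : p.HolderConjugate q) (hs : 0 ≤ s) (ht : 0 ≤ t)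
    (h : s ^ p ≤ t ^ q) : s ≤ t ^ (q - 1) := by
  rw [← rpow_rpow_inv_eq_rpow_sub_one hpq ht, ← Real.rpow_rpow_inv hs hpq.ne_zero]
  exact Real.rpow_le_rpow (by positivity) h (inv_nonneg.2 hpq.nonneg)

theorem eq_rpow_sub_one_of_rpow_eq (hpq : p.HolderConjugate q) (hs : 0 ≤ s) (ht : 0 ≤ t)
    (h : s ^ p = t ^ q) : s = t ^ (q - 1) := by
  rw [← rpow_rpow_inv_eq_rpow_sub_one hpq ht, ← h, Real.rpow_rpow_inv hs hpq.ne_zero]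

theorem rpow_two_mul_rpow_two_sub_le (hq : q ≠ 0) (hs : 0 ≤ s) (ht : 0 ≤ t)
    (h : s ≤ t ^ (q - 1)) : s ^ (2 : ℝ) * t ^ (2 - q) ≤ t ^ q := by
  calc s ^ (2 : ℝ) * t ^ (2 - q) ≤ (t ^ (q - 1)) ^ (2 : ℝ) * t ^ (2 - q) := by gcongr
    _ = t ^ q := by
      rw [← Real.rpow_mul ht, ← Real.rpow_add' ht (by convert hq using 1; ring)]
      ring_nf

theorem two_div_sub_one_nonneg (hq : 0 < q) (hq2 : q ≤ 2) : 0 ≤ 2 / q - 1 := by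
  rw [sub_nonneg, le_div_iff₀ hq]
  linarith

theorem le_two_of_holderConjugate (hpq : p.HolderConjugate q) (hp : 2 ≤ p) : q ≤ 2 := by
  rw [hpq.conjugate_eq, div_le_iff₀ hpq.sub_one_pos]
  linarith

end Exponents

section Bellman

variable {E : Type*} [NormedAddCommGroup E] (p q δ : ℝ)

def bellmanSmall (v : E × E) : ℝ :=
  ‖v.1‖ ^ p + ‖v.2‖ ^ q + δ * (‖v.1‖ ^ (2 : ℝ) * ‖v.2‖ ^ (2 - q))

def bellmanLarge (v : E × E) : ℝ :=
  (1 + δ * (2 / p)) * ‖v.1‖ ^ p + (1 + δ * (2 / q - 1)) * ‖v.2‖ ^ q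

def bellman (v : E × E) : ℝ :=
  if ‖v.1‖ ^ p ≤ ‖v.2‖ ^ q then bellmanSmall p q δ v else bellmanLarge p q δ v

theorem qnt_eq_bellman (ζ η : ℂ) : Paper.QNT p q δ ζ η = bellman p q δ (ζ, η) := by
  unfold Paper.QNT bellman bellmanSmall bellmanLarge
  split_ifs <;> ring

variable {p q δ}

theorem bellmanSmall_eq_bellmanLarge (hpq : p.HolderConjugate q) {v : E × E}
    (h : ‖v.1‖ ^ p = ‖v.2‖ ^ q) : bellmanSmall p q δ v = bellmanLarge p q δ v := by
  have hs := eq_rpow_sub_one_of_rpow_eq hpq (norm_nonneg _) (norm_nonneg _) h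
  have hq := hpq.symm.ne_zero
  have key : ‖v.1‖ ^ (2 : ℝ) * ‖v.2‖ ^ (2 - q) = ‖v.2‖ ^ q := by
    rw [hs, ← Real.rpow_mul (norm_nonneg _),
      ← Real.rpow_add' (norm_nonneg _) (by convert hq using 1; ring)]
    ring_nf
  have hcoef : 2 / p + 2 / q = 2 := by
    rw [div_add_div _ _ hpq.ne_zero hq, div_eq_iff (mul_ne_zero hpq.ne_zero hq)]
    linear_combination -2 * hpq.mul_eq_add
  unfold bellmanSmall bellmanLarge
  rw [key, h]
  linear_combination -δ * ‖v.2‖ ^ q * hcoef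

theorem bellman_nonneg (hp : 0 < p) (hq : 0 < q) (hq2 : q ≤ 2) (hδ : 0 ≤ δ) (v : E × E) :
    0 ≤ bellman p q δ v := by
  have := two_div_sub_one_nonneg hq hq2
  unfold bellman bellmanSmall bellmanLarge
  split_ifs <;> positivity

theorem bellman_le (hpq : p.HolderConjugate q) (hp : 2 ≤ p) (hδ : 0 ≤ δ) (v : E × E) :
    bellman p q δ v ≤ (1 + δ) * (‖v.1‖ ^ p + ‖v.2‖ ^ q) := by
  have hs : 0 ≤ ‖v.1‖ ^ p := by positivity
  have ht : 0 ≤ ‖v.2‖ ^ q := by positivity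
  unfold bellman bellmanSmall bellmanLarge
  split_ifs with h
  · have := rpow_two_mul_rpow_two_sub_le hpq.symm.ne_zero (norm_nonneg _) (norm_nonneg _)
      (le_rpow_sub_one_of_rpow_le hpq (norm_nonneg _) (norm_nonneg _) h)
    nlinarith
  · have hp' : 2 / p ≤ 1 := by rw [div_le_one hpq.pos]; exact hp
    have hq' : 2 / q - 1 ≤ 1 := by
      rw [sub_le_iff_le_add, div_le_iff₀ hpq.symm.pos]; linarith [hpq.symm.lt]
    nlinarith [mul_le_mul_of_nonneg_left hp' hδ, mul_le_mul_of_nonneg_left hq' hδ]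

theorem eventually_norm_rpow_lt {X : Type*} [TopologicalSpace X] {f g : X → E}
    (hf : Continuous f) (hg : Continuous g) (hp : 0 ≤ p) (hq : 0 ≤ q) {x : X}
    (h : ‖f x‖ ^ p < ‖g x‖ ^ q) :
    ∀ᶠ y in 𝓝 x, ‖f y‖ ^ p < ‖g y‖ ^ q :=
  (hf.norm.rpow_const fun _ => .inr hp).continuousAt.eventually_lt
    (hg.norm.rpow_const fun _ => .inr hq).continuousAt h

end Bellman

section BellmanDeriv

variable {E : Type*} [NormedAddCommGroup E] [InnerProductSpace ℝ E] (p q δ : ℝ)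

def bellmanSmallDerivFst (v : E × E) : E →L[ℝ] ℝ :=
  fderivNormRpow p v.1 + (δ * ‖v.2‖ ^ (2 - q)) • fderivNormRpow 2 v.1

def bellmanSmallDerivSnd (v : E × E) : E →L[ℝ] ℝ :=
  fderivNormRpow q v.2 + (δ * ‖v.1‖ ^ (2 : ℝ)) • fderivNormRpow (2 - q) v.2

def bellmanLargeDerivFst (v : E × E) : E →L[ℝ] ℝ := (1 + δ * (2 / p)) • fderivNormRpow p v.1

def bellmanLargeDerivSnd (v : E × E) : E →L[ℝ] ℝ :=
  (1 + δ * (2 / q - 1)) • fderivNormRpow q v.2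

variable {p q δ}

theorem hasFDerivAt_bellmanSmall (hp : 1 < p) (hq : 1 < q) {v : E × E} (hv : v.2 ≠ 0) :
    HasFDerivAt (bellmanSmall p q δ)
      ((bellmanSmallDerivFst p q δ v).coprod (bellmanSmallDerivSnd q δ v)) v := by
  have h₁ := (hasFDerivAt_norm_rpow' p (.inr hp)).comp v (hasFDerivAt_fst (p := v))
  have h₂ := (hasFDerivAt_norm_rpow' q (.inr hq)).comp v (hasFDerivAt_snd (p := v))
  have h₃ := (hasFDerivAt_norm_rpow' 2 (.inr one_lt_two)).comp v (hasFDerivAt_fst (p := v))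
  have h₄ := (hasFDerivAt_norm_rpow' (2 - q) (.inl hv)).comp v (hasFDerivAt_snd (p := v))
  refine ((h₁.add h₂).add ((h₃.mul h₄).const_mul δ)).congr_fderiv ?_
  ext w <;> simp [bellmanSmallDerivFst, bellmanSmallDerivSnd] <;> ring

theorem hasFDerivAt_bellmanLarge (hp : 1 < p) (hq : 1 < q) (v : E × E) :
    HasFDerivAt (bellmanLarge p q δ)
      ((bellmanLargeDerivFst p δ v).coprod (bellmanLargeDerivSnd q δ v)) v := by
  have h₁ := (hasFDerivAt_norm_rpow' p (.inr hp)).comp v (hasFDerivAt_fst (p := v))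
  have h₂ := (hasFDerivAt_norm_rpow' q (.inr hq)).comp v (hasFDerivAt_snd (p := v))
  refine ((h₁.const_mul (1 + δ * (2 / p))).add
    (h₂.const_mul (1 + δ * (2 / q - 1)))).congr_fderiv ?_
  ext w <;> simp [bellmanLargeDerivFst, bellmanLargeDerivSnd]

theorem bellmanSmallDerivFst_eq (hpq : p.HolderConjugate q) {v : E × E}
    (h : ‖v.1‖ ^ p = ‖v.2‖ ^ q) : bellmanSmallDerivFst p q δ v = bellmanLargeDerivFst p δ v := by
  have hs := eq_rpow_sub_one_of_rpow_eq hpq (norm_nonneg _) (norm_nonneg _) h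
  have key : ‖v.1‖ ^ (p - 2) = ‖v.2‖ ^ (2 - q) := by
    rw [hs, ← Real.rpow_mul (norm_nonneg _)]
    congr 1
    linear_combination hpq.mul_eq_add
  simp only [bellmanSmallDerivFst, bellmanLargeDerivFst, fderivNormRpow, smul_smul, ← add_smul]
  congr 1
  rw [← key, sub_self, Real.rpow_zero]
  field_simp [hpq.ne_zero]

theorem bellmanSmallDerivSnd_eq (hpq : p.HolderConjugate q) {v : E × E} (hv : v.2 ≠ 0)
    (h : ‖v.1‖ ^ p = ‖v.2‖ ^ q) : bellmanSmallDerivSnd q δ v = bellmanLargeDerivSnd q δ v := by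
  have hs := eq_rpow_sub_one_of_rpow_eq hpq (norm_nonneg _) (norm_nonneg _) h
  have key : ‖v.1‖ ^ (2 : ℝ) * ‖v.2‖ ^ (2 - q - 2) = ‖v.2‖ ^ (q - 2) := by
    rw [hs, ← Real.rpow_mul (norm_nonneg _), ← Real.rpow_add (norm_pos_iff.2 hv)]
    ring_nf
  simp only [bellmanSmallDerivSnd, bellmanLargeDerivSnd, fderivNormRpow, smul_smul, ← add_smul]
  congr 1
  field_simp [hpq.symm.ne_zero]
  linear_combination (2 - q) * δ * key

theorem norm_bellmanLargeDerivFst_le (hp : 0 < p) (hδ : 0 ≤ δ) (v : E × E) :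
    ‖bellmanLargeDerivFst p δ v‖ ≤ (p + 2 * δ) * ‖v.1‖ ^ (p - 1) := by
  calc ‖bellmanLargeDerivFst p δ v‖ ≤ (1 + δ * (2 / p)) * (p * ‖v.1‖ ^ (p - 1)) := by
        rw [bellmanLargeDerivFst, norm_smul, Real.norm_of_nonneg (by positivity)]
        gcongr
        exact norm_fderivNormRpow_le hp.le _
    _ = (p + 2 * δ) * ‖v.1‖ ^ (p - 1) := by field_simp

theorem norm_bellmanLargeDerivSnd_le (hq : 0 < q) (hq2 : q ≤ 2) (hδ : 0 ≤ δ) (v : E × E) :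
    ‖bellmanLargeDerivSnd q δ v‖ ≤ (q + (2 - q) * δ) * ‖v.2‖ ^ (q - 1) := by
  have := two_div_sub_one_nonneg hq hq2
  calc ‖bellmanLargeDerivSnd q δ v‖ ≤ (1 + δ * (2 / q - 1)) * (q * ‖v.2‖ ^ (q - 1)) := by
        rw [bellmanLargeDerivSnd, norm_smul, Real.norm_of_nonneg (by positivity)]
        gcongr
        exact norm_fderivNormRpow_le hq.le _
    _ = (q + (2 - q) * δ) * ‖v.2‖ ^ (q - 1) := by field_simp

theorem norm_bellmanSmallDerivFst_le (hp : 0 ≤ p) (hδ : 0 ≤ δ) {v : E × E}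
    (hs : ‖v.1‖ ≤ ‖v.2‖ ^ (q - 1)) :
    ‖bellmanSmallDerivFst p q δ v‖ ≤ p * ‖v.1‖ ^ (p - 1) + 2 * δ * ‖v.2‖ := by
  have h₂ : ‖v.2‖ ^ (2 - q) * ‖v.1‖ ≤ ‖v.2‖ := by
    calc ‖v.2‖ ^ (2 - q) * ‖v.1‖ ≤ ‖v.2‖ ^ (2 - q) * ‖v.2‖ ^ (q - 1) := by gcongr
      _ = ‖v.2‖ := by rw [← Real.rpow_add' (norm_nonneg _) (by norm_num)]; norm_num
  calc ‖bellmanSmallDerivFst p q δ v‖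
      ≤ p * ‖v.1‖ ^ (p - 1) + δ * ‖v.2‖ ^ (2 - q) * (2 * ‖v.1‖ ^ ((2 : ℝ) - 1)) := by
        refine (norm_add_le _ _).trans (add_le_add (norm_fderivNormRpow_le hp _) ?_)
        rw [norm_smul, Real.norm_of_nonneg (by positivity)]
        gcongr
        exact norm_fderivNormRpow_le zero_le_two _
    _ = p * ‖v.1‖ ^ (p - 1) + 2 * δ * (‖v.2‖ ^ (2 - q) * ‖v.1‖) := by norm_num; ring
    _ ≤ p * ‖v.1‖ ^ (p - 1) + 2 * δ * ‖v.2‖ := by gcongr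

theorem norm_bellmanSmallDerivSnd_le (hq : 1 < q) (hq2 : q ≤ 2) (hδ : 0 ≤ δ) {v : E × E}
    (hs : ‖v.1‖ ≤ ‖v.2‖ ^ (q - 1)) :
    ‖bellmanSmallDerivSnd q δ v‖ ≤ (q + (2 - q) * δ) * ‖v.2‖ ^ (q - 1) := by
  have h₂ : ‖v.1‖ ^ (2 : ℝ) * ‖v.2‖ ^ (2 - q - 1) ≤ ‖v.2‖ ^ (q - 1) := by
    calc ‖v.1‖ ^ (2 : ℝ) * ‖v.2‖ ^ (2 - q - 1)
        ≤ (‖v.2‖ ^ (q - 1)) ^ (2 : ℝ) * ‖v.2‖ ^ (2 - q - 1) := by gcongr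
      _ = ‖v.2‖ ^ (q - 1) := by
        rw [← Real.rpow_mul (norm_nonneg _),
          ← Real.rpow_add' (norm_nonneg _) (by ring_nf; linarith)]
        ring_nf
  calc ‖bellmanSmallDerivSnd q δ v‖
      ≤ q * ‖v.2‖ ^ (q - 1) + δ * ‖v.1‖ ^ (2 : ℝ) * ((2 - q) * ‖v.2‖ ^ (2 - q - 1)) := by
        refine (norm_add_le _ _).trans (add_le_add (norm_fderivNormRpow_le (by linarith) _) ?_)
        rw [norm_smul, Real.norm_of_nonneg (by positivity)]
        gcongr
        exact norm_fderivNormRpow_le (by linarith) _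
    _ = q * ‖v.2‖ ^ (q - 1) + (2 - q) * δ * (‖v.1‖ ^ (2 : ℝ) * ‖v.2‖ ^ (2 - q - 1)) := by ring
    _ ≤ (q + (2 - q) * δ) * ‖v.2‖ ^ (q - 1) := by
        have : 0 ≤ (2 - q) * δ := mul_nonneg (by linarith) hδ
        linarith [mul_le_mul_of_nonneg_left h₂ this]

theorem hasFDerivAt_bellman_of_lt (hp : 1 < p) (hq : 1 < q) {v : E × E}
    (h : ‖v.1‖ ^ p < ‖v.2‖ ^ q) :
    HasFDerivAt (bellman p q δ)
      ((bellmanSmallDerivFst p q δ v).coprod (bellmanSmallDerivSnd q δ v)) v := by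
  have hv : v.2 ≠ 0 := by
    rintro hv
    rw [hv, norm_zero, Real.zero_rpow (by linarith)] at h
    exact (Real.rpow_nonneg (norm_nonneg _) p).not_gt h
  refine (hasFDerivAt_bellmanSmall hp hq hv).congr_of_eventuallyEq ?_
  filter_upwards [eventually_norm_rpow_lt continuous_fst continuous_snd (by linarith)
    (by linarith) h] with w hw
  exact if_pos hw.le

theorem hasFDerivAt_bellman_of_gt (hp : 1 < p) (hq : 1 < q) {v : E × E}
    (h : ‖v.2‖ ^ q < ‖v.1‖ ^ p) :
    HasFDerivAt (bellman p q δ)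
      ((bellmanLargeDerivFst p δ v).coprod (bellmanLargeDerivSnd q δ v)) v := by
  refine (hasFDerivAt_bellmanLarge hp hq v).congr_of_eventuallyEq ?_
  filter_upwards [eventually_norm_rpow_lt continuous_snd continuous_fst (by linarith)
    (by linarith) h] with w hw
  exact if_neg hw.not_ge

theorem hasFDerivAt_bellman_of_eq (hpq : p.HolderConjugate q) {v : E × E} (hv : v.2 ≠ 0)
    (h : ‖v.1‖ ^ p = ‖v.2‖ ^ q) :
    HasFDerivAt (bellman p q δ)
      ((bellmanLargeDerivFst p δ v).coprod (bellmanLargeDerivSnd q δ v)) v := by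
  have hsmall := hasFDerivAt_bellmanSmall (δ := δ) hpq.lt hpq.symm.lt hv
  rw [bellmanSmallDerivFst_eq hpq h, bellmanSmallDerivSnd_eq hpq hv h] at hsmall
  have hval : bellman p q δ v = bellmanSmall p q δ v := if_pos h.le
  exact hsmall.of_eq_or_eq (hasFDerivAt_bellmanLarge hpq.lt hpq.symm.lt v) hval
    (hval.trans (bellmanSmall_eq_bellmanLarge hpq h)) fun _ => ite_eq_or_eq _ _ _

theorem hasFDerivAt_bellman_zero (hpq : p.HolderConjugate q) (hp : 2 ≤ p) (hδ : 0 ≤ δ) :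
    HasFDerivAt (bellman p q δ) (0 : E × E →L[ℝ] ℝ) 0 := by
  have h₁ := (hasFDerivAt_norm_rpow (0 : E × E).1 hpq.lt).comp (0 : E × E)
    (hasFDerivAt_fst (p := (0 : E × E)))
  have h₂ := (hasFDerivAt_norm_rpow (0 : E × E).2 hpq.symm.lt).comp (0 : E × E)
    (hasFDerivAt_snd (p := (0 : E × E)))
  have hg : HasFDerivAt (fun w : E × E => (1 + δ) * (‖w.1‖ ^ p + ‖w.2‖ ^ q))
      (0 : E × E →L[ℝ] ℝ) 0 := by
    simpa using (h₁.add h₂).const_mul (1 + δ)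
  refine hg.zero_of_abs_le ?_ ?_ fun w => ?_
  · simp [Real.zero_rpow hpq.ne_zero, Real.zero_rpow hpq.symm.ne_zero]
  · simp [bellman, bellmanSmall, Real.zero_rpow hpq.ne_zero, Real.zero_rpow hpq.symm.ne_zero]
  · have hq2 := le_two_of_holderConjugate hpq hp
    rw [abs_of_nonneg (bellman_nonneg hpq.pos hpq.symm.pos hq2 hδ w)]
    exact bellman_le hpq hp hδ w

theorem hasFDerivAt_bellman_of_le (hpq : p.HolderConjugate q) (hp : 2 ≤ p) (hδ : 0 ≤ δ)
    {v : E × E} (h : ‖v.2‖ ^ q ≤ ‖v.1‖ ^ p) :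
    HasFDerivAt (bellman p q δ)
      ((bellmanLargeDerivFst p δ v).coprod (bellmanLargeDerivSnd q δ v)) v := by
  rcases h.lt_or_eq with h | h
  · exact hasFDerivAt_bellman_of_gt hpq.lt hpq.symm.lt h
  rcases eq_or_ne v.2 0 with hv | hv
  · obtain rfl : v = 0 := by
      refine Prod.ext ?_ hv
      rw [hv, norm_zero, Real.zero_rpow hpq.symm.ne_zero] at h
      simpa [Real.rpow_eq_zero (norm_nonneg _) hpq.ne_zero] using h.symm
    have h0 : (bellmanLargeDerivFst p δ (0 : E × E)).coprod
        (bellmanLargeDerivSnd q δ (0 : E × E)) = 0 := by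
      ext <;> simp [bellmanLargeDerivFst, bellmanLargeDerivSnd]
    exact h0 ▸ hasFDerivAt_bellman_zero hpq hp hδ
  · exact hasFDerivAt_bellman_of_eq hpq hv h.symm

theorem exists_hasFDerivAt_bellman (hpq : p.HolderConjugate q) (hp : 2 ≤ p) (hδ : 0 ≤ δ)
    (v : E × E) : ∃ L₁ L₂ : E →L[ℝ] ℝ, HasFDerivAt (bellman p q δ) (L₁.coprod L₂) v ∧
      ‖L₁‖ ≤ (p + 2 * δ) * max (‖v.1‖ ^ (p - 1)) ‖v.2‖ ∧
      ‖L₂‖ ≤ (q + (2 - q) * δ) * ‖v.2‖ ^ (q - 1) := by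
  have hq2 := le_two_of_holderConjugate hpq hp
  rcases lt_or_ge (‖v.1‖ ^ p) (‖v.2‖ ^ q) with h | h
  · have hs := le_rpow_sub_one_of_rpow_le hpq (norm_nonneg _) (norm_nonneg _) h.le
    refine ⟨_, _, hasFDerivAt_bellman_of_lt hpq.lt hpq.symm.lt h, ?_,
      norm_bellmanSmallDerivSnd_le hpq.symm.lt hq2 hδ hs⟩
    calc _ ≤ p * ‖v.1‖ ^ (p - 1) + 2 * δ * ‖v.2‖ := norm_bellmanSmallDerivFst_le hpq.nonneg hδ hs
      _ ≤ p * max (‖v.1‖ ^ (p - 1)) ‖v.2‖ + 2 * δ * max (‖v.1‖ ^ (p - 1)) ‖v.2‖ := by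
        gcongr
        exacts [le_max_left _ _, le_max_right _ _]
      _ = (p + 2 * δ) * max (‖v.1‖ ^ (p - 1)) ‖v.2‖ := by ring
  · refine ⟨_, _, hasFDerivAt_bellman_of_le hpq hp hδ h, ?_,
      norm_bellmanLargeDerivSnd_le hpq.symm.pos hq2 hδ v⟩
    exact (norm_bellmanLargeDerivFst_le hpq.pos hδ v).trans (by gcongr; exact le_max_left _ _)

end BellmanDeriv

end NazarovTreil

/-- size and gradient estimates for the Nazarov–Treil Bellman function. -/
theorem statement17 (p q δ : ℝ) (hp : 2 ≤ p) (hq : q = p / (p - 1)) (hδ : 0 < δ) :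
    (∀ ζ η : ℂ, 0 ≤ Paper.QNT p q δ ζ η ∧
      Paper.QNT p q δ ζ η ≤ (1 + δ) * (‖ζ‖ ^ p + ‖η‖ ^ q)) ∧
    Differentiable ℝ (fun v : ℂ × ℂ => Paper.QNT p q δ v.1 v.2) ∧
    (∀ ζ η : ℂ,
      ‖fderiv ℝ (fun ζ' : ℂ => Paper.QNT p q δ ζ' η) ζ‖
        ≤ (p + 2 * δ) * max (‖ζ‖ ^ (p - 1)) (‖η‖) ∧
      ‖fderiv ℝ (fun η' : ℂ => Paper.QNT p q δ ζ η') η‖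
        ≤ (q + (2 - q) * δ) * ‖η‖ ^ (q - 1)) := by
  open NazarovTreil in
  have hpq : p.HolderConjugate q := (Real.holderConjugate_iff_eq_conjExponent (by linarith)).2 hq
  have hq2 : q ≤ 2 := le_two_of_holderConjugate hpq hp
  simp_rw [qnt_eq_bellman]
  refine ⟨fun ζ η => ⟨bellman_nonneg hpq.pos hpq.symm.pos hq2 hδ.le _, bellman_le hpq hp hδ.le _⟩,
    fun v => ?_, fun ζ η => ?_⟩
  · obtain ⟨L₁, L₂, hL, -⟩ := exists_hasFDerivAt_bellman hpq hp hδ.le v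
    exact hL.differentiableAt
  · obtain ⟨L₁, L₂, hL, h₁, h₂⟩ := exists_hasFDerivAt_bellman hpq hp hδ.le (ζ, η)
    rw [hL.partial_fst.fderiv, hL.partial_snd.fderiv]
    exact ⟨h₁, h₂⟩
end
end

section
/- Let 1 < q < 2, let 0 < λ ≤ Λ, and let A and B be n×n complex matrices belonging to 𝒜_{λ,Λ}; set λ_A := min{ Re⟨Aξ,ξ⟩ : |ξ| = 1 }. Let Φ : ℂ×ℂ → ℝ be Φ(ζ,η) = |ζ|²·|η|^{2−q}. Then for every v = (ζ,η) ∈ ℂ×ℂ with |ζ| < |η|^{q−1} (so in particular η ≠ 0), Φ is twice real-Fréchet differentiable at v and, for every ω = (ω₁,ω₂) ∈ ℂⁿ×ℂⁿ, H_Φ^{(A,B)}[v;ω] ≥ 2·λ_A·|η|^{2−q}·|ω₁|² − 4(2−q)·Λ·|ω₁|·|ω₂| + ((2−q)²/2)·Δ_{2−q}(B)·|η|^{q−2}·|ω₂|². -/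
open scoped BigOperators ComplexConjugate Matrix

noncomputable section

/-!
Write `Φ(ζ, η) = |ζ|² |η|^p` with `p = 2 - q ∈ (0, 1)`. Off `η = 0`, `Φ` is twice differentiable
with Hessian `|η|^p D²|·|²(ζ) + (mixed terms) + |ζ|² D²|·|^p(η)`. Paired with `(ω₁, ω₂)` and
`(Aω₁, Bω₂)`:
* the first part is `2|η|^p Re⟨Aω₁, ω₁⟩ ≥ 2λ_A |η|^p |ω₁|²`;
* the mixed part is `2p|η|^(p-2)` times two numbers `Re⟨Mω, u⟩` with `|u| ≤ |ζ||η||ω'|`, hence at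
  least `-4pΛ|ω₁||ω₂|` because `|ζ| ≤ |η|^(1-p)`;
* by `∑ⱼ ⟪η, ωⱼ⟫⟪η, ω'ⱼ⟫ = (|η|² Re⟨ω', ω⟩ + Re(η̄² ⟨ω', ω̄⟩)) / 2` (real inner products on `ℂ`),
  the last part is at least `|ζ|² (p²/2) Δ_p(B) |η|^(p-2) |ω₂|²`; as `Δ_p(B) ≤ 0` for `p ≤ 1`,
  the bound `|ζ|² ≤ |η|^(2-2p)` turns this into `(p²/2) Δ_p(B) |η|^(-p) |ω₂|²`.
-/

open Filter Topology
open scoped RealInnerProductSpace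

section Hessian

variable {E F : Type*} [NormedAddCommGroup E] [InnerProductSpace ℝ E]
  [NormedAddCommGroup F] [InnerProductSpace ℝ F]

theorem hasFDerivAt_norm_rpow_of_ne_zero {x : E} (hx : x ≠ 0) (p : ℝ) :
    HasFDerivAt (fun x : E ↦ ‖x‖ ^ p) ((p * ‖x‖ ^ (p - 2)) • innerSL ℝ x) x := by
  have hsq : (fun x : E ↦ ‖x‖ ^ p) = fun x ↦ (‖x‖ ^ 2) ^ (p / 2) := by
    funext x
    rw [← Real.rpow_natCast_mul (norm_nonneg x)]
    ring_nf
  rw [hsq]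
  refine ((hasStrictFDerivAt_norm_sq x).hasFDerivAt.rpow_const (p := p / 2)
    (by simp [hx])).congr_fderiv ?_
  rw [← Real.rpow_natCast_mul (norm_nonneg x), ← Nat.cast_smul_eq_nsmul ℝ, smul_smul]
  congr 1
  push_cast
  ring_nf

/-- `E × F` carries the sup norm; this is the inner product of the orthogonal sum `E ⊕ F`. -/
def prodInner : E × F →L[ℝ] E × F →L[ℝ] ℝ :=
  (innerSL ℝ).bilinearComp (.fst ℝ E F) (.fst ℝ E F)
    + (innerSL ℝ).bilinearComp (.snd ℝ E F) (.snd ℝ E F)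

@[simp] theorem prodInner_apply (a w : E × F) : prodInner a w = ⟪a.1, w.1⟫ + ⟪a.2, w.2⟫ := rfl

def normSqMulRpow (p : ℝ) (v : E × F) : ℝ := ‖v.1‖ ^ 2 * ‖v.2‖ ^ p

def gradNormSqMulRpow (p : ℝ) (v : E × F) : E × F :=
  ((2 * ‖v.2‖ ^ p) • v.1, (p * ‖v.1‖ ^ 2 * ‖v.2‖ ^ (p - 2)) • v.2)

def normRpowHess (p : ℝ) (y u u' : F) : ℝ :=
  p * ‖y‖ ^ (p - 2) * ⟪u, u'⟫ + p * (p - 2) * ‖y‖ ^ (p - 4) * (⟪y, u⟫ * ⟪y, u'⟫)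

def normSqMulRpowHess (p : ℝ) (v w w' : E × F) : ℝ :=
  2 * ‖v.2‖ ^ p * ⟪w.1, w'.1⟫
    + 2 * p * ‖v.2‖ ^ (p - 2) * (⟪v.1, w.1⟫ * ⟪v.2, w'.2⟫ + ⟪v.2, w.2⟫ * ⟪v.1, w'.1⟫)
    + ‖v.1‖ ^ 2 * normRpowHess p v.2 w.2 w'.2

variable {v : E × F}

theorem hasFDerivAt_norm_snd_rpow (hv : v.2 ≠ 0) (p : ℝ) :
    HasFDerivAt (fun v : E × F ↦ ‖v.2‖ ^ p)
      (((p * ‖v.2‖ ^ (p - 2)) • innerSL ℝ v.2).comp (.snd ℝ E F)) v :=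
  (hasFDerivAt_norm_rpow_of_ne_zero hv p).comp v hasFDerivAt_snd

variable {p : ℝ}

theorem hasFDerivAt_normSqMulRpow (hv : v.2 ≠ 0) :
    HasFDerivAt (normSqMulRpow p) (prodInner (gradNormSqMulRpow p v)) v :=
  (hasFDerivAt_fst.norm_sq.mul (hasFDerivAt_norm_snd_rpow hv p)).congr_fderiv <| by
    ext w <;> simp [gradNormSqMulRpow, inner_smul_left] <;> ring

theorem fderiv_normSqMulRpow_eventuallyEq (hv : v.2 ≠ 0) :
    fderiv ℝ (normSqMulRpow p) =ᶠ[𝓝 v] fun u ↦ prodInner (gradNormSqMulRpow p u) := by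
  filter_upwards [(isOpen_ne.preimage continuous_snd).mem_nhds hv] with u hu
  exact (hasFDerivAt_normSqMulRpow hu).fderiv

theorem hasFDerivAt_fderiv_normSqMulRpow (hv : v.2 ≠ 0) :
    ∃ D : E × F →L[ℝ] E × F →L[ℝ] ℝ, HasFDerivAt (fderiv ℝ (normSqMulRpow p)) D v ∧
      ∀ w w', D w w' = normSqMulRpowHess p v w w' := by
  have hc₁ := (hasFDerivAt_norm_snd_rpow hv p).const_mul 2
  have hc₂ := (hasFDerivAt_fst.norm_sq.const_mul p).mul (hasFDerivAt_norm_snd_rpow hv (p - 2))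
  have hgrad := (hc₁.smul hasFDerivAt_fst).prodMk (hc₂.smul hasFDerivAt_snd)
  have hD := HasFDerivAt.comp (G := E × F →L[ℝ] ℝ) v
    (prodInner (E := E) (F := F)).hasFDerivAt hgrad
  refine ⟨_, hD.congr_of_eventuallyEq (fderiv_normSqMulRpow_eventuallyEq hv), fun w w' ↦ ?_⟩
  simp only [ContinuousLinearMap.comp_apply, ContinuousLinearMap.prod_apply,
    add_apply, smul_apply, ContinuousLinearMap.smul_comp,
    ContinuousLinearMap.smulRight_apply, ContinuousLinearMap.coe_fst',
    ContinuousLinearMap.coe_snd', coe_innerSL_apply, Pi.mul_apply, smul_eq_mul, nsmul_eq_mul,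
    Nat.cast_ofNat, prodInner_apply, inner_add_left, inner_smul_left, Real.ringHom_apply,
    normSqMulRpowHess, normRpowHess]
  ring_nf

end Hessian

namespace Paper

variable {n : ℕ}

theorem cnorm_eq_norm (z : Fin n → ℂ) :
    cnorm z = ‖(WithLp.toLp 2 z : EuclideanSpace ℂ (Fin n))‖ := by
  simp [cnorm, herm, EuclideanSpace.norm_eq, Complex.re_sum, Complex.mul_conj,
    Complex.normSq_eq_norm_sq, -Complex.ofReal_pow]

theorem cnorm_nonneg (z : Fin n → ℂ) : 0 ≤ cnorm z := by
  rw [cnorm_eq_norm]; exact norm_nonneg _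

theorem cnorm_eq_zero {z : Fin n → ℂ} : cnorm z = 0 ↔ z = 0 := by
  simp [cnorm_eq_norm]

theorem cnorm_smul (c : ℝ) (z : Fin n → ℂ) : cnorm (c • z) = |c| * cnorm z := by
  rw [cnorm_eq_norm, cnorm_eq_norm, WithLp.toLp_smul, norm_smul, Real.norm_eq_abs]

theorem cnorm_vconj (z : Fin n → ℂ) : cnorm (vconj z) = cnorm z := by
  simp [cnorm_eq_norm, EuclideanSpace.norm_eq, vconj]

theorem cnorm_le_of_norm_le {u ψ : Fin n → ℂ} {c : ℝ} (hc : 0 ≤ c)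
    (h : ∀ j, ‖u j‖ ≤ c * ‖ψ j‖) : cnorm u ≤ c * cnorm ψ := by
  simp only [cnorm_eq_norm, EuclideanSpace.norm_eq]
  rw [← Real.sqrt_sq hc, ← Real.sqrt_mul (sq_nonneg c), Finset.mul_sum]
  gcongr with j
  rw [← mul_pow]
  exact pow_le_pow_left₀ (norm_nonneg _) (h j) 2

theorem herm_smul_smul (c : ℝ) (z w : Fin n → ℂ) :
    herm (c • z) (c • w) = ((c ^ 2 : ℝ) : ℂ) * herm z w := by
  simp only [herm, Finset.mul_sum, Pi.smul_apply, Complex.real_smul, map_mul, Complex.conj_ofReal]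
  push_cast
  exact Finset.sum_congr rfl fun j _ ↦ by ring

theorem vconj_smul (c : ℝ) (z : Fin n → ℂ) : vconj (c • z) = c • vconj z := by
  ext j; simp [vconj, Complex.real_smul]

theorem sInf_mul_cnorm_sq_le {g : (Fin n → ℂ) → ℝ} (hg : ∀ (c : ℝ) ξ, g (c • ξ) = c ^ 2 * g ξ)
    (hbdd : BddBelow {t | ∃ ξ, cnorm ξ = 1 ∧ t = g ξ}) (ω : Fin n → ℂ) :
    sInf {t | ∃ ξ, cnorm ξ = 1 ∧ t = g ξ} * cnorm ω ^ 2 ≤ g ω := by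
  rcases eq_or_ne ω 0 with rfl | hω
  · have : g 0 = 0 := by simpa using hg 0 0
    simp [this, cnorm_eq_zero.2]
  have hc : 0 < cnorm ω := (cnorm_nonneg ω).lt_of_ne' (cnorm_eq_zero.not.2 hω)
  have hunit : cnorm (((cnorm ω)⁻¹ : ℝ) • ω) = 1 := by
    rw [cnorm_smul, abs_inv, abs_of_pos hc, inv_mul_cancel₀ hc.ne']
  have hle := csInf_le hbdd ⟨_, hunit, rfl⟩
  rw [hg] at hle
  calc sInf {t | ∃ ξ, cnorm ξ = 1 ∧ t = g ξ} * cnorm ω ^ 2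
      ≤ (cnorm ω)⁻¹ ^ 2 * g ω * cnorm ω ^ 2 := by gcongr
    _ = g ω := by field_simp

variable {lam Lam : ℝ} {A : Matrix (Fin n) (Fin n) ℂ}

theorem lamA_mul_cnorm_sq_le (hA : memA lam Lam A) (ω : Fin n → ℂ) :
    lamA A * cnorm ω ^ 2 ≤ (herm (A *ᵥ ω) ω).re := by
  refine sInf_mul_cnorm_sq_le (g := fun ξ ↦ (herm (A *ᵥ ξ) ξ).re) (fun c ξ ↦ ?_) ?_ ω
  · simp only [Matrix.mulVec_smul, herm_smul_smul, Complex.re_ofReal_mul]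
  · refine ⟨lam, ?_⟩
    rintro _ ⟨ξ, hξ, rfl⟩
    simpa [hξ] using hA.1 ξ

theorem DeltaGen_mul_cnorm_sq_le (hA : memA lam Lam A) (r : ℝ) (ω : Fin n → ℂ) :
    DeltaGen r A * cnorm ω ^ 2
      ≤ (herm (A *ᵥ ω) ω).re - |1 - 2 / r| * ‖herm (A *ᵥ ω) (vconj ω)‖ := by
  refine sInf_mul_cnorm_sq_le
    (g := fun ξ ↦ (herm (A *ᵥ ξ) ξ).re - |1 - 2 / r| * ‖herm (A *ᵥ ξ) (vconj ξ)‖)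
    (fun c ξ ↦ ?_) ?_ ω
  · simp only [Matrix.mulVec_smul, vconj_smul, herm_smul_smul, Complex.re_ofReal_mul, norm_mul,
      Complex.norm_real, Real.norm_of_nonneg (sq_nonneg c)]
    ring
  · refine ⟨lam - |1 - 2 / r| * Lam, ?_⟩
    rintro _ ⟨ξ, hξ, rfl⟩
    have h₁ := hA.1 ξ
    have h₂ := hA.2 ξ (vconj ξ)
    rw [cnorm_vconj, hξ] at h₂
    rw [hξ] at h₁
    have := mul_le_mul_of_nonneg_left h₂ (abs_nonneg (1 - 2 / r))
    simp only [one_pow, mul_one] at h₁ this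
    linarith

theorem DeltaGen_mul_cnorm_sq_nonpos (hA : memA lam Lam A) {r : ℝ} (hr : 1 ≤ |1 - 2 / r|)
    (ω : Fin n → ℂ) : DeltaGen r A * cnorm ω ^ 2 ≤ 0 := by
  rcases eq_or_ne ω 0 with rfl | hω
  · simp [cnorm_eq_zero.2]
  obtain ⟨i, -⟩ := Function.ne_iff.1 hω
  -- a real unit vector `e` has `ē = e`, so `Re⟨Ae, e⟩ - |1 - 2/r| |⟨Ae, ē⟩| ≤ 0`
  have he : cnorm (Pi.single i 1 : Fin n → ℂ) = 1 := by simp [cnorm_eq_norm]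
  have hve : vconj (Pi.single i 1 : Fin n → ℂ) = Pi.single i 1 := by
    ext j; simp [vconj, Pi.single_apply]
  have h := DeltaGen_mul_cnorm_sq_le hA r (Pi.single i 1)
  rw [he, hve] at h
  set Z := herm (A *ᵥ Pi.single i 1) (Pi.single i 1)
  have hΔ : DeltaGen r A ≤ 0 := by
    nlinarith [Complex.re_le_norm Z, norm_nonneg Z]
  exact mul_nonpos_of_nonpos_of_nonneg hΔ (sq_nonneg _)

theorem sum_inner_eq_re_herm (ω ψ : Fin n → ℂ) : ∑ j, ⟪ω j, ψ j⟫ = (herm ψ ω).re := by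
  simp [herm, Complex.re_sum, Complex.inner]

theorem sum_inner_mul_inner_eq_re_herm (a b : ℂ) (ψ χ : Fin n → ℂ) :
    ∑ j, ⟪a, ψ j⟫ * ⟪b, χ j⟫ = (herm χ fun j ↦ (⟪a, ψ j⟫ : ℂ) * b).re := by
  simp only [herm, Complex.re_sum]
  refine Finset.sum_congr rfl fun j _ ↦ ?_
  simp only [Complex.inner, map_mul, Complex.conj_ofReal, Complex.mul_re, Complex.ofReal_re,
    Complex.ofReal_im, Complex.mul_im]
  ring

theorem sum_inner_mul_inner_same_eq (e : ℂ) (ω ψ : Fin n → ℂ) :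
    ∑ j, ⟪e, ω j⟫ * ⟪e, ψ j⟫
      = (‖e‖ ^ 2 * (herm ψ ω).re + (conj e ^ 2 * herm ψ (vconj ω)).re) / 2 := by
  simp only [herm, vconj, Complex.re_sum, Finset.mul_sum, ← Finset.sum_add_distrib,
    Finset.sum_div]
  refine Finset.sum_congr rfl fun j _ ↦ ?_
  rw [Complex.sq_norm, Complex.normSq_apply]
  simp only [Complex.inner, Complex.mul_re, Complex.mul_im, Complex.conj_re, Complex.conj_im,
    pow_two]
  ring

theorem abs_sum_inner_mul_inner_mulVec_le (hLam : 0 ≤ Lam) (hA : memA lam Lam A) (a b : ℂ)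
    (ψ ω : Fin n → ℂ) :
    |∑ j, ⟪a, ψ j⟫ * ⟪b, (A *ᵥ ω) j⟫| ≤ Lam * ‖a‖ * ‖b‖ * cnorm ψ * cnorm ω := by
  have hu : cnorm (fun j ↦ (⟪a, ψ j⟫ : ℂ) * b) ≤ ‖a‖ * ‖b‖ * cnorm ψ := by
    refine cnorm_le_of_norm_le (by positivity) fun j ↦ ?_
    rw [norm_mul, Complex.norm_real, Real.norm_eq_abs]
    calc |⟪a, ψ j⟫| * ‖b‖ ≤ ‖a‖ * ‖ψ j‖ * ‖b‖ := by gcongr; exact abs_real_inner_le_norm _ _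
      _ = ‖a‖ * ‖b‖ * ‖ψ j‖ := by ring
  rw [sum_inner_mul_inner_eq_re_herm]
  calc _ ≤ ‖herm (A *ᵥ ω) fun j ↦ (⟪a, ψ j⟫ : ℂ) * b‖ := Complex.abs_re_le_norm _
    _ ≤ Lam * cnorm ω * cnorm (fun j ↦ (⟪a, ψ j⟫ : ℂ) * b) := hA.2 _ _
    _ ≤ Lam * cnorm ω * (‖a‖ * ‖b‖ * cnorm ψ) :=
      mul_le_mul_of_nonneg_left hu (mul_nonneg hLam (cnorm_nonneg ω))
    _ = Lam * ‖a‖ * ‖b‖ * cnorm ψ * cnorm ω := by ring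

theorem mul_DeltaGen_le_sum_normRpowHess {p : ℝ} (hp : 0 < p) (hA : memA lam Lam A) {η : ℂ}
    (hη : η ≠ 0) (ω : Fin n → ℂ) :
    p ^ 2 / 2 * DeltaGen p A * ‖η‖ ^ (p - 2) * cnorm ω ^ 2
      ≤ ∑ j, normRpowHess p η (ω j) ((A *ᵥ ω) j) := by
  set t := ‖η‖
  set R := (herm (A *ᵥ ω) ω).re
  set X := herm (A *ᵥ ω) (vconj ω)
  have ht : 0 < t := norm_pos_iff.2 hη
  have hsum : ∑ j, normRpowHess p η (ω j) ((A *ᵥ ω) j)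
      = p * t ^ (p - 2) * R
        + p * (p - 2) * t ^ (p - 4) * ((t ^ 2 * R + (conj η ^ 2 * X).re) / 2) := by
    simp only [normRpowHess, Finset.sum_add_distrib, ← Finset.mul_sum, sum_inner_eq_re_herm,
      sum_inner_mul_inner_same_eq, R, X, t]
  have ht4 : t ^ (p - 4) * t ^ 2 = t ^ (p - 2) := by
    rw [← Real.rpow_natCast, ← Real.rpow_add ht]
    norm_num [show p - 4 + 2 = p - 2 by ring]
  have hcoef : |p * (p - 2)| = p ^ 2 * |1 - 2 / p| := by
    rw [show 1 - 2 / p = (p - 2) / p by field_simp, abs_div, abs_mul, abs_of_pos hp]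
    field_simp
  have hre : |(conj η ^ 2 * X).re| ≤ t ^ 2 * ‖X‖ :=
    (Complex.abs_re_le_norm _).trans (by rw [norm_mul, norm_pow, Complex.norm_conj])
  have hcross : -(p ^ 2 * |1 - 2 / p| * t ^ (p - 2) * ‖X‖)
      ≤ p * (p - 2) * t ^ (p - 4) * (conj η ^ 2 * X).re := by
    refine le_trans ?_ (neg_abs_le _)
    rw [abs_mul, abs_mul, abs_of_pos (Real.rpow_pos_of_pos ht _), hcoef, neg_le_neg_iff, ← ht4]
    have := mul_le_mul_of_nonneg_left hre
      (by positivity : 0 ≤ p ^ 2 * |1 - 2 / p| * t ^ (p - 4))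
    linarith
  have hΔ := DeltaGen_mul_cnorm_sq_le hA p ω
  calc p ^ 2 / 2 * DeltaGen p A * t ^ (p - 2) * cnorm ω ^ 2
      = p ^ 2 / 2 * t ^ (p - 2) * (DeltaGen p A * cnorm ω ^ 2) := by ring
    _ ≤ p ^ 2 / 2 * t ^ (p - 2) * (R - |1 - 2 / p| * ‖X‖) := by gcongr
    _ ≤ _ := by
      rw [hsum, ← ht4]
      rw [← ht4] at hcross
      linarith

theorem mul_DeltaGen_le_normSq_mul_sum_normRpowHess {p : ℝ} (hp : 0 < p) (hp₁ : p ≤ 1)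
    (hA : memA lam Lam A) {ζ η : ℂ} (hη : η ≠ 0) (hζ : ‖ζ‖ ≤ ‖η‖ ^ (1 - p)) (ω : Fin n → ℂ) :
    p ^ 2 / 2 * DeltaGen p A * ‖η‖ ^ (-p) * cnorm ω ^ 2
      ≤ ‖ζ‖ ^ 2 * ∑ j, normRpowHess p η (ω j) ((A *ᵥ ω) j) := by
  have hS := mul_DeltaGen_le_sum_normRpowHess hp hA hη ω
  have hΔ : DeltaGen p A * cnorm ω ^ 2 ≤ 0 := by
    refine DeltaGen_mul_cnorm_sq_nonpos hA (le_abs.2 (Or.inr ?_)) ω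
    have : 2 ≤ 2 / p := (le_div_iff₀ hp).2 (by linarith)
    linarith
  have ht : 0 < ‖η‖ := norm_pos_iff.2 hη
  have hpow : (‖η‖ ^ (1 - p)) ^ 2 * ‖η‖ ^ (p - 2) = ‖η‖ ^ (-p) := by
    rw [← Real.rpow_natCast, ← Real.rpow_mul ht.le, ← Real.rpow_add ht]
    norm_num [show (1 - p) * 2 + (p - 2) = -p by ring]
  have hζ₂ : ‖ζ‖ ^ 2 ≤ (‖η‖ ^ (1 - p)) ^ 2 := pow_le_pow_left₀ (norm_nonneg ζ) hζ 2
  have hK : p ^ 2 / 2 * ‖η‖ ^ (p - 2) * (DeltaGen p A * cnorm ω ^ 2) ≤ 0 :=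
    mul_nonpos_of_nonneg_of_nonpos (by positivity) hΔ
  rw [← hpow]
  nlinarith [sq_nonneg ‖ζ‖]

theorem neg_le_sum_inner_mul_inner_mulVec_add {p : ℝ} (hp : 0 ≤ p) (hLam : 0 ≤ Lam)
    {B : Matrix (Fin n) (Fin n) ℂ} (hA : memA lam Lam A) (hB : memA lam Lam B) {ζ η : ℂ}
    (hη : η ≠ 0) (hζ : ‖ζ‖ ≤ ‖η‖ ^ (1 - p)) (ω₁ ω₂ : Fin n → ℂ) :
    -(4 * p * Lam * cnorm ω₁ * cnorm ω₂)
      ≤ 2 * p * ‖η‖ ^ (p - 2) * (∑ j, ⟪ζ, ω₁ j⟫ * ⟪η, (B *ᵥ ω₂) j⟫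
        + ∑ j, ⟪η, ω₂ j⟫ * ⟪ζ, (A *ᵥ ω₁) j⟫) := by
  have h₁ := neg_abs_le _ |>.trans' <| neg_le_neg <|
    abs_sum_inner_mul_inner_mulVec_le hLam hB ζ η ω₁ ω₂
  have h₂ := neg_abs_le _ |>.trans' <| neg_le_neg <|
    abs_sum_inner_mul_inner_mulVec_le hLam hA η ζ ω₂ ω₁
  have ht : 0 < ‖η‖ := norm_pos_iff.2 hη
  have hpow : ‖η‖ ^ (p - 2) * ‖η‖ ^ (1 - p) * ‖η‖ = 1 := by
    rw [← Real.rpow_add ht, ← Real.rpow_add_one ht.ne', show p - 2 + (1 - p) + 1 = 0 by ring,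
      Real.rpow_zero]
  have hζη : Lam * ‖ζ‖ * ‖η‖ * cnorm ω₁ * cnorm ω₂
      ≤ Lam * ‖η‖ ^ (1 - p) * ‖η‖ * cnorm ω₁ * cnorm ω₂ := by
    have hn₁ := cnorm_nonneg ω₁
    have hn₂ := cnorm_nonneg ω₂
    gcongr
  calc -(4 * p * Lam * cnorm ω₁ * cnorm ω₂)
      = 2 * p * ‖η‖ ^ (p - 2) * -(2 * (Lam * ‖η‖ ^ (1 - p) * ‖η‖ * cnorm ω₁ * cnorm ω₂)) := by
        linear_combination (4 * p * Lam * cnorm ω₁ * cnorm ω₂) * hpow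
    _ ≤ _ := mul_le_mul_of_nonneg_left (by linarith) (by positivity)

end Paper

/-- lower bound for the generalized Hessian of
`Φ(ζ,η) = |ζ|²|η|^{2−q}` in the region `|ζ| < |η|^{q−1}`. -/
theorem statement19 (n : ℕ) (q lam Lam : ℝ) (hq1 : 1 < q) (hq2 : q < 2)
    (hlam : 0 < lam) (hLam : lam ≤ Lam)
    (A B : Matrix (Fin n) (Fin n) ℂ) (hA : Paper.memA lam Lam A)
    (hB : Paper.memA lam Lam B)
    (ζ η : ℂ) (hv : ‖ζ‖ < ‖η‖ ^ (q - 1)) :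
    Paper.TwiceDiffAt2
      (fun v : ℂ × ℂ => ‖v.1‖ ^ (2 : ℝ) * ‖v.2‖ ^ (2 - q)) (ζ, η) ∧
    ∀ ω₁ ω₂ : Fin n → ℂ,
      2 * Paper.lamA A * ‖η‖ ^ (2 - q) * Paper.cnorm ω₁ ^ 2
          - 4 * (2 - q) * Lam * Paper.cnorm ω₁ * Paper.cnorm ω₂
          + ((2 - q) ^ 2 / 2) * Paper.DeltaGen (2 - q) B
              * ‖η‖ ^ (q - 2) * Paper.cnorm ω₂ ^ 2
        ≤ Paper.HAB
            (fun v : ℂ × ℂ => ‖v.1‖ ^ (2 : ℝ) * ‖v.2‖ ^ (2 - q))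
            A B (ζ, η) ω₁ ω₂ := by
  have hp : 0 < 2 - q := by linarith
  have hη : η ≠ 0 := by
    rintro rfl
    rw [norm_zero, Real.zero_rpow (by linarith)] at hv
    exact (norm_nonneg ζ).not_gt hv
  have hΦ : (fun v : ℂ × ℂ ↦ ‖v.1‖ ^ (2 : ℝ) * ‖v.2‖ ^ (2 - q)) = normSqMulRpow (2 - q) := by
    funext v
    rw [Real.rpow_two, normSqMulRpow]
  obtain ⟨D, hD, hDw⟩ := hasFDerivAt_fderiv_normSqMulRpow (p := 2 - q) (v := (ζ, η)) hη
  rw [hΦ]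
  refine ⟨⟨(hasFDerivAt_normSqMulRpow hη).differentiableAt, hD.differentiableAt⟩, fun ω₁ ω₂ ↦ ?_⟩
  simp only [Paper.HAB, hD.fderiv, hDw, normSqMulRpowHess, Finset.sum_add_distrib,
    ← Finset.mul_sum, Paper.sum_inner_eq_re_herm]
  have hq : q - 1 = 1 - (2 - q) := by ring
  have hdiag := mul_le_mul_of_nonneg_left (Paper.lamA_mul_cnorm_sq_le hA ω₁)
    (by positivity : 0 ≤ 2 * ‖η‖ ^ (2 - q))
  have hmixed := Paper.neg_le_sum_inner_mul_inner_mulVec_add hp.le (by linarith) hA hB hη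
    (hq ▸ hv.le) ω₁ ω₂
  have hpower := Paper.mul_DeltaGen_le_normSq_mul_sum_normRpowHess hp (by linarith) hB hη
    (hq ▸ hv.le) ω₂
  rw [show q - 2 = -(2 - q) by ring]
  linarith
end
end
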